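/- Suppose for each n ≥ 1 there is a real number ρ'_n with −(2n+2) < ρ'_n < −2n. Then for s = 1/2 + it with t > 0 and any n with 2n > t, the real part of ((−ρ'_n − 2n)/((s − ρ'_n)(s + 2n))) is positive. -/
import Mathlib

open Complex

theorem tail_term_re_pos (ρ' : ℕ → ℝ)
    (hρ' : ∀ n : ℕ, 1 ≤ n → -(2 * (n : ℝ) + 2) < ρ' n ∧ ρ' n < -(2 * (n : ℝ)))
    (t : ℝ) (ht : 0 < t) (n : ℕ) (hn : 1 ≤ n) (htn : t < 2 * n) :
    0 < (((-(ρ' n : ℂ) - 2 * n) /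
        (((1 / 2 + t * I) - (ρ' n : ℂ)) * ((1 / 2 + t * I) + 2 * n)))).re := by
  obtain ⟨h1, h2⟩ := hρ' n hn
  set p := ρ' n with hp
  set z : ℂ := ((1 / 2 + t * I) - (p : ℂ)) * ((1 / 2 + t * I) + 2 * n) with hz
  have hnum_re : ((-(p : ℂ) - 2 * n)).re = -p - 2 * n := by simp
  have hnum_im : ((-(p : ℂ) - 2 * n)).im = 0 := by simp
  have hzre : z.re = (1 / 2 - p) * (1 / 2 + 2 * n) - t * t := by
    simp [hz, Complex.mul_re]
  have hzre_pos : 0 < z.re := by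
    rw [hzre]
    have hA : (1 / 2 : ℝ) + 2 * n ≤ 1 / 2 - p := by linarith
    have hB : (0 : ℝ) < 1 / 2 + 2 * n := by positivity
    nlinarith
  have hz0 : z ≠ 0 := by
    intro h
    rw [h] at hzre_pos
    simp at hzre_pos
  have hns : 0 < Complex.normSq z := Complex.normSq_pos.mpr hz0
  rw [Complex.div_re, hnum_re, hnum_im]
  have hnumpos : 0 < -p - 2 * n := by linarith
  rw [zero_mul, zero_div, add_zero]
  exact div_pos (mul_pos hnumpos hzre_pos) hns
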